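/- For all x, y, s, t in the real Okubo algebra 𝒪, the equality ⟨t*s, x⟩ − ⟨t, y⟩ − ⟨s, x*y⟩ + n(y) + n(s)·n(x) + n(t) = 0 holds if and only if y = s*x + t. Equivalently, the point (x,y) of the Okubic affine plane is incident to the line [s,t] if and only if its Veronese image (x,y,x*y;n(y),n(x),1) is β-orthogonal to the vector (t*s,−t,−s;1,n(s),n(t)). -/

import Mathlib

/-!
The left-hand side of the incidence condition is the norm `n(y − (s*x + t))`. Expanding that norm
uses two properties of the Okubo product on traceless Hermitian matrices. The norm is
multiplicative, `n(s*x) = n(s) n(x)`: this follows from `μ + μ̄ = 1`, `μ μ̄ = 1/3` and the trace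
identity `4 tr(A²B²) + 2 tr(ABAB) = tr(A²) tr(B²) + 2 tr(AB)²` for traceless `3 × 3` matrices. The
polar form is associative, `⟨t*s, x⟩ = ⟨s*x, t⟩` and `⟨s, x*y⟩ = ⟨s*x, y⟩`, by cyclicity of the
trace. As `n` is positive definite on Hermitian matrices, the expression vanishes exactly when
`y = s*x + t`; the β-orthogonality condition is the same expression written out coordinatewise.
-/

open Matrix Complex

noncomputable section

/-- `3 × 3` complex matrices. -/
abbrev M3 : Type := Matrix (Fin 3) (Fin 3) ℂ

/-- The real Okubo algebra: `3 × 3` traceless Hermitian complex matrices. -/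
def Okubo : Set M3 := {x | x.IsHermitian ∧ x.trace = 0}

/-- The constant `μ = (3 + i√3)/6`. -/
def okMu : ℂ := (3 + (Real.sqrt 3 : ℂ) * Complex.I) / 6

/-- The Okubo product `x*y = μ·(xy) + μ̄·(yx) − (1/3)Tr(xy)·Id`. -/
def omul (x y : M3) : M3 :=
  okMu • (x * y) + (starRingEnd ℂ) okMu • (y * x) - ((1 / 3 : ℂ) * (x * y).trace) • (1 : M3)

/-- The Okubic norm `n(x) = (1/6)Tr(x²)` (real-valued on Hermitian matrices). -/
def onorm (x : M3) : ℝ := (1 / 6) * ((x * x).trace).re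

/-- The polar form `⟨x,y⟩ = n(x+y) − n(x) − n(y)` of the Okubic norm. -/
def opolar (x y : M3) : ℝ := onorm (x + y) - onorm x - onorm y


/-- The bilinear form `β` on `𝒪³ × ℝ³`. -/
def okBeta (v w : (M3 × M3 × M3) × (ℝ × ℝ × ℝ)) : ℝ :=
  opolar v.1.1 w.1.1 + opolar v.1.2.1 w.1.2.1 + opolar v.1.2.2 w.1.2.2 +
    v.2.1 * w.2.1 + v.2.2.1 * w.2.2.1 + v.2.2.2 * w.2.2.2

lemma okMu_conj : (starRingEnd ℂ) okMu = (3 - (Real.sqrt 3 : ℂ) * Complex.I) / 6 := by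
  simp only [okMu, map_div₀, map_add, map_mul, Complex.conj_I, Complex.conj_ofReal, map_ofNat]
  ring

lemma okMu_add_conj : okMu + (starRingEnd ℂ) okMu = 1 := by
  rw [okMu_conj, okMu]; ring

lemma okMu_mul_conj : okMu * (starRingEnd ℂ) okMu = 1 / 3 := by
  have hsqrt : ((Real.sqrt 3 : ℝ) : ℂ) ^ 2 = 3 := by
    rw [← Complex.ofReal_pow, Real.sq_sqrt (by norm_num)]; norm_num
  rw [okMu_conj, okMu]
  linear_combination (1 / 36) * hsqrt - ((Real.sqrt 3 : ℂ) ^ 2 / 36) * Complex.I_sq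

namespace Matrix

lemma IsHermitian.star_trace_mul {n α : Type*} [Fintype n] [CommRing α] [StarRing α]
    {A B : Matrix n n α} (hA : A.IsHermitian) (hB : B.IsHermitian) :
    star (A * B).trace = (A * B).trace := by
  rw [← trace_conjTranspose, conjTranspose_mul, hA.eq, hB.eq, trace_mul_comm]

lemma IsHermitian.ofReal_re_trace_mul {n : Type*} [Fintype n] {A B : Matrix n n ℂ}
    (hA : A.IsHermitian) (hB : B.IsHermitian) : ((A * B).trace.re : ℂ) = (A * B).trace :=
  Complex.conj_eq_iff_re.mp (hA.star_trace_mul hB)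

lemma trace_identity_of_trace_eq_zero {R : Type*} [CommRing R] {A B : Matrix (Fin 3) (Fin 3) R}
    (hA : A.trace = 0) (hB : B.trace = 0) :
    4 * (A * A * (B * B)).trace + 2 * (A * B * (A * B)).trace =
      (A * A).trace * (B * B).trace + 2 * (A * B).trace ^ 2 := by
  simp only [trace, diag, Fin.sum_univ_three] at hA hB
  have hA₂ : A 2 2 = -(A 0 0 + A 1 1) := by linear_combination hA
  have hB₂ : B 2 2 = -(B 0 0 + B 1 1) := by linear_combination hB
  simp only [trace, diag, mul_apply, Fin.sum_univ_three]
  rw [hA₂, hB₂]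
  ring

end Matrix

lemma opolar_eq_re_trace (x y : M3) : opolar x y = (1 / 3) * ((x * y).trace).re := by
  have hsq : (x + y) * (x + y) = x * x + (x * y + (y * x + y * y)) := by noncomm_ring
  simp only [opolar, onorm, hsq, trace_add, trace_mul_comm y x, Complex.add_re]
  ring

lemma opolar_comm (x y : M3) : opolar x y = opolar y x := by
  rw [opolar_eq_re_trace, opolar_eq_re_trace, trace_mul_comm]

lemma opolar_add_right (x y z : M3) : opolar x (y + z) = opolar x y + opolar x z := by
  simp only [opolar_eq_re_trace, Matrix.mul_add, trace_add, Complex.add_re]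
  ring

lemma opolar_neg_right (x y : M3) : opolar x (-y) = -opolar x y := by
  simp only [opolar_eq_re_trace, Matrix.mul_neg, trace_neg, Complex.neg_re]
  ring

lemma onorm_neg (x : M3) : onorm (-x) = onorm x := by
  simp [onorm]

lemma onorm_add (x y : M3) : onorm (x + y) = onorm x + onorm y + opolar x y := by
  rw [opolar]; ring

lemma onorm_sub (x y : M3) : onorm (x - y) = onorm x + onorm y - opolar x y := by
  rw [sub_eq_add_neg, onorm_add, onorm_neg, opolar_neg_right]; ring

open ComplexOrder in
lemma onorm_eq_zero_iff {x : M3} (hx : x.IsHermitian) : onorm x = 0 ↔ x = 0 := by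
  have hzero := trace_conjTranspose_mul_self_eq_zero_iff (A := x)
  rw [hx.eq, ← hx.ofReal_re_trace_mul hx, Complex.ofReal_eq_zero] at hzero
  rw [onorm, mul_eq_zero, or_iff_right (by norm_num), hzero]

lemma isHermitian_omul {x y : M3} (hx : x.IsHermitian) (hy : y.IsHermitian) :
    (omul x y).IsHermitian := by
  have hconj : (starRingEnd ℂ) (starRingEnd ℂ okMu) = okMu := Complex.conj_conj _
  show _ᴴ = _
  simp only [omul, conjTranspose_add, conjTranspose_sub, conjTranspose_smul, conjTranspose_mul,
    conjTranspose_one, hx.eq, hy.eq, star_mul', hx.star_trace_mul hy, Complex.star_def, hconj,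
    map_div₀, map_one, map_ofNat]
  abel

lemma trace_omul_mul_self {s x : M3} (hs : s.trace = 0) (hx : x.trace = 0) :
    (omul s x * omul s x).trace = (s * s).trace * (x * x).trace / 6 := by
  simp only [omul, Matrix.add_mul, Matrix.mul_add, Matrix.sub_mul, Matrix.mul_sub,
    smul_mul_assoc, mul_smul_comm, Matrix.one_mul, Matrix.mul_one,
    trace_add, trace_sub, trace_smul, trace_one, smul_eq_mul, Fintype.card_fin, Nat.cast_ofNat]
  have hsxxs : (s * x * (x * s)).trace = (s * s * (x * x)).trace := by
    rw [← Matrix.mul_assoc, trace_mul_comm, Matrix.mul_assoc s]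
    simp only [← Matrix.mul_assoc]
  have hxssx : (x * s * (s * x)).trace = (s * s * (x * x)).trace := by
    rw [← Matrix.mul_assoc, trace_mul_comm, trace_mul_comm (s * s)]
    simp only [← Matrix.mul_assoc]
  have hxsxs : (x * s * (x * s)).trace = (s * x * (s * x)).trace := by
    rw [← Matrix.mul_assoc, trace_mul_comm, Matrix.mul_assoc]
    simp only [← Matrix.mul_assoc]
  rw [hsxxs, hxssx, hxsxs, trace_mul_comm x s]
  linear_combination (1 / 6) * trace_identity_of_trace_eq_zero hs hx +
    ((okMu + (starRingEnd ℂ) okMu + 1) * (s * x * (s * x)).trace -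
      (2 / 3) * (s * x).trace ^ 2) * okMu_add_conj +
    (2 * (s * s * (x * x)).trace - 2 * (s * x * (s * x)).trace) * okMu_mul_conj

lemma onorm_omul {s x : M3} (hs : s ∈ Okubo) (hx : x ∈ Okubo) :
    onorm (omul s x) = onorm s * onorm x := by
  rw [onorm, onorm, onorm, trace_omul_mul_self hs.2 hx.2, ← hs.1.ofReal_re_trace_mul hs.1,
    ← hx.1.ofReal_re_trace_mul hx.1]
  simp only [← Complex.ofReal_mul, Complex.div_ofNat_re, Complex.ofReal_re]
  ring

lemma opolar_omul_cycle {t s x : M3} (ht : t.trace = 0) (hx : x.trace = 0) :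
    opolar (omul t s) x = opolar (omul s x) t := by
  simp only [opolar_eq_re_trace, omul, Matrix.add_mul, Matrix.sub_mul, smul_mul_assoc,
    Matrix.one_mul, trace_add, trace_sub, trace_smul, smul_eq_mul, ht, hx,
    trace_mul_cycle s x t, trace_mul_cycle x s t, trace_mul_cycle t x s, mul_zero, sub_zero]

lemma opolar_omul_assoc {s x y : M3} (hs : s.trace = 0) (hy : y.trace = 0) :
    opolar s (omul x y) = opolar (omul s x) y := by
  simp only [opolar_eq_re_trace, omul, Matrix.mul_add, Matrix.mul_sub, Matrix.add_mul,
    Matrix.sub_mul, mul_smul_comm, smul_mul_assoc, Matrix.mul_one, Matrix.one_mul, trace_add,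
    trace_sub, trace_smul, smul_eq_mul, hs, hy, ← Matrix.mul_assoc, trace_mul_cycle s y x,
    mul_zero, sub_zero]

lemma incidence_form_eq_onorm {x y s t : M3} (hx : x ∈ Okubo) (hy : y ∈ Okubo) (hs : s ∈ Okubo)
    (ht : t ∈ Okubo) :
    opolar (omul t s) x - opolar t y - opolar s (omul x y) + onorm y + onorm s * onorm x +
      onorm t = onorm (y - (omul s x + t)) := by
  rw [onorm_sub, onorm_add, opolar_add_right, onorm_omul hs hx, opolar_omul_cycle ht.2 hx.2,
    opolar_omul_assoc hs.2 hy.2, opolar_comm t y, opolar_comm y (omul s x)]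
  ring

lemma okBeta_veronese (x y s t : M3) :
    okBeta ((x, y, omul x y), (onorm y, onorm x, 1)) ((omul t s, -t, -s), (1, onorm s, onorm t)) =
      opolar (omul t s) x - opolar t y - opolar s (omul x y) + onorm y + onorm s * onorm x +
        onorm t := by
  simp only [okBeta, opolar_neg_right, opolar_comm x (omul t s), opolar_comm y t,
    opolar_comm (omul x y) s]
  ring

/-- For all `x, y, s, t ∈ 𝒪`,
`⟨t*s, x⟩ − ⟨t, y⟩ − ⟨s, x*y⟩ + n(y) + n(s)·n(x) + n(t) = 0` iff `y = s*x + t`;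
equivalently the Veronese image of `(x,y)` is β-orthogonal to
`(t*s, −t, −s; 1, n(s), n(t))` iff `(x,y)` is incident to the line `[s,t]`. -/
theorem okubo_paper_stmt15 :
    ∀ x ∈ Okubo, ∀ y ∈ Okubo, ∀ s ∈ Okubo, ∀ t ∈ Okubo,
      ((opolar (omul t s) x - opolar t y - opolar s (omul x y) +
          onorm y + onorm s * onorm x + onorm t = 0) ↔ y = omul s x + t) ∧
      ((okBeta ((x, y, omul x y), (onorm y, onorm x, 1))
          ((omul t s, -t, -s), (1, onorm s, onorm t)) = 0) ↔ y = omul s x + t) := by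
  intro x hx y hy s hs t ht
  have hincidence : (opolar (omul t s) x - opolar t y - opolar s (omul x y) +
      onorm y + onorm s * onorm x + onorm t = 0) ↔ y = omul s x + t := by
    have hherm : (y - (omul s x + t)).IsHermitian :=
      hy.1.sub ((isHermitian_omul hs.1 hx.1).add ht.1)
    rw [incidence_form_eq_onorm hx hy hs ht, onorm_eq_zero_iff hherm, sub_eq_zero]
  exact ⟨hincidence, okBeta_veronese x y s t ▸ hincidence⟩

end
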